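/- Let t ∈ ℝ, p ∈ [0,1], and let E₀ = √p·I₂, E₁ = √(1−p)·σ_x be the Bit Flip Kraus operators. Set M_k := U_qs(t)† · (E_k ⊗ I₄) for k = 0,1 (noise acting on the first of the three qubits). Then the average fidelity F_avg := (1/(8·9))·(tr(M₀†M₀ + M₁†M₁) + |tr M₀|² + |tr M₁|²) equals (1/18)·(p·(cos(t) + 3)² + 2); in particular the Bit Flip and Phase Flip channels yield the same average fidelity for the quantum switch. -/

import Mathlib

open Matrix Complex

/-- The Hamiltonian of the quantum qubit switch: the 8×8 complex matrix whose only
nonzero entries are `(H_qs)_{3,5} = (H_qs)_{5,3} = 1`. -/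
noncomputable def Hqs : Matrix (Fin 8) (Fin 8) ℂ :=
  Matrix.of fun i j =>
    if (i = 3 ∧ j = 5) ∨ (i = 5 ∧ j = 3) then 1 else 0

/-- The time-evolution operator `U_qs(t) = exp(−i t H_qs)` (matrix exponential). -/
noncomputable def Uqs (t : ℝ) : Matrix (Fin 8) (Fin 8) ℂ :=
  NormedSpace.exp ((-(Complex.I * (t : ℂ))) • Hqs)

/-- Kronecker product `E ⊗ I₄` of a one-qubit operator E with the identity on the
remaining two qubits: entry (4a+r, 4b+c) is `E a b · δ_{r c}`. -/
noncomputable def kronI4 (E : Matrix (Fin 2) (Fin 2) ℂ) : Matrix (Fin 8) (Fin 8) ℂ :=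
  Matrix.of fun r c =>
    E ⟨r.val / 4, by omega⟩ ⟨c.val / 4, by omega⟩ *
      (if r.val % 4 = c.val % 4 then 1 else 0)

/-- Average fidelity between U_qs(t) and the noisy evolution given by Kraus operators
E₀, E₁ acting on the first qubit: with M_k = U_qs(t)†·(E_k ⊗ I₄) and n = 8,
F_avg = (1/(n(n+1)))·(tr(M₀†M₀ + M₁†M₁) + |tr M₀|² + |tr M₁|²). -/
noncomputable def Favg (t : ℝ) (E₀ E₁ : Matrix (Fin 2) (Fin 2) ℂ) : ℂ :=
  (1 / (8 * 9) : ℂ) *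
    ((((Uqs t)ᴴ * kronI4 E₀)ᴴ * ((Uqs t)ᴴ * kronI4 E₀)
      + ((Uqs t)ᴴ * kronI4 E₁)ᴴ * ((Uqs t)ᴴ * kronI4 E₁)).trace
    + ((‖((Uqs t)ᴴ * kronI4 E₀).trace‖ ^ 2 : ℝ) : ℂ)
    + ((‖((Uqs t)ᴴ * kronI4 E₁).trace‖ ^ 2 : ℝ) : ℂ))

/-- The Pauli X matrix. -/
def σx : Matrix (Fin 2) (Fin 2) ℂ := !![0, 1; 1, 0]

/-- The Pauli Z matrix. -/
def σz : Matrix (Fin 2) (Fin 2) ℂ := !![1, 0; 0, -1]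

/-! Since `H_qs³ = H_qs`, `exp (a • H_qs) = 1 + (cosh a - 1) • H_qs² + sinh a • H_qs`. Here `H_qs²`
is the projection onto `span {|011⟩, |101⟩}`, one state for each value of the first qubit, and
`H_qs` links no two basis states that differ only in the first qubit. Hence
`tr (U_qs(t)† (E ⊗ I₄)) = (3 + cos t) · tr E`, and by unitarity `tr Σ M_k†M_k = 4 tr Σ E_k†E_k`:
the average fidelity only sees `Σ E_k†E_k` and the traces `tr E_k`. For both the bit flip and
the phase flip channel these are `I` and `(2√p, 0)`. -/

open scoped Kronecker

theorem exp_smul_of_isIdempotentElem {A : Type*} [Ring A] [Algebra ℂ A] [TopologicalSpace A]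
    [IsTopologicalRing A] [ContinuousSMul ℂ A] [T2Space A] {Q : A} (hQ : IsIdempotentElem Q)
    (a : ℂ) : NormedSpace.exp (a • Q) = 1 + (Complex.exp a - 1) • Q := by
  have hterm : (fun n : ℕ => (n.factorial⁻¹ : ℂ) • (a • Q) ^ n) =
      fun n => (n.factorial⁻¹ * a ^ n : ℂ) • Q + if n = 0 then 1 - Q else 0 := by
    funext n
    cases n with
    | zero => simp
    | succ k => simp [smul_pow, hQ.pow_succ_eq, smul_smul]
  have hsum : HasSum (fun n : ℕ => (n.factorial⁻¹ : ℂ) • (a • Q) ^ n)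
      (Complex.exp a • Q + (1 - Q)) := by
    rw [hterm, Complex.exp_eq_exp_ℂ]
    exact ((NormedSpace.exp_series_hasSum_exp' (𝕂 := ℂ) a).smul_const Q).add
      (hasSum_ite_eq 0 (1 - Q))
  rw [NormedSpace.exp_eq_tsum ℂ]
  beta_reduce
  rw [hsum.tsum_eq, sub_smul, one_smul]
  abel

theorem Matrix.exp_smul_of_mul_mul_self_eq_self {n : Type*} [Fintype n] [DecidableEq n]
    {H : Matrix n n ℂ} (hH : H * H * H = H) (a : ℂ) :
    NormedSpace.exp (a • H) = 1 + (Complex.cosh a - 1) • (H * H) + Complex.sinh a • H := by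
  -- the spectral projections of `H` for the eigenvalues `1` and `-1`
  set Qp : Matrix n n ℂ := (2⁻¹ : ℂ) • (H * H + H)
  set Qm : Matrix n n ℂ := (2⁻¹ : ℂ) • (H * H - H)
  have hQp : IsIdempotentElem Qp := by
    simp only [IsIdempotentElem, Qp, smul_mul_smul, add_mul, mul_add, ← mul_assoc, hH]
    module
  have hQm : IsIdempotentElem Qm := by
    simp only [IsIdempotentElem, Qm, smul_mul_smul, sub_mul, mul_sub, ← mul_assoc, hH]
    module
  have hQpm : Qp * Qm = 0 := by
    simp only [Qp, Qm, smul_mul_smul, add_mul, mul_sub, ← mul_assoc, hH]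
    module
  have hQmp : Qm * Qp = 0 := by
    simp only [Qp, Qm, smul_mul_smul, sub_mul, mul_add, ← mul_assoc, hH]
    module
  have hsplit : a • H = a • Qp + (-a) • Qm := by module
  have hcomm : Commute (a • Qp) ((-a) • Qm) := by
    simp only [Commute, SemiconjBy, smul_mul_smul, hQpm, hQmp, smul_zero]
  rw [hsplit, Matrix.exp_add_of_commute _ _ hcomm, exp_smul_of_isIdempotentElem hQp,
    exp_smul_of_isIdempotentElem hQm, Complex.cosh, Complex.sinh]
  simp only [add_mul, mul_add, one_mul, mul_one, smul_mul_smul, hQpm, smul_zero, add_zero, Qp, Qm]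
  module

theorem Hqs_eq : Hqs = single 3 5 1 + single 5 3 1 := by
  ext i j
  fin_cases i <;> fin_cases j <;> simp [Hqs]

theorem isHermitian_Hqs : Hqs.IsHermitian := by
  simp [IsHermitian, Hqs_eq, conjTranspose_single, add_comm]

theorem Hqs_mul_Hqs : Hqs * Hqs = single 3 3 1 + single 5 5 1 := by
  simp [Hqs_eq, add_mul, mul_add, single_mul_single_of_ne, add_comm]

theorem Hqs_mul_Hqs_mul_Hqs : Hqs * Hqs * Hqs = Hqs := by
  rw [Hqs_mul_Hqs, Hqs_eq]
  simp [add_mul, mul_add, single_mul_single_of_ne, add_comm]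

theorem kronI4_eq (E : Matrix (Fin 2) (Fin 2) ℂ) :
    kronI4 E = (E ⊗ₖ (1 : Matrix (Fin 4) (Fin 4) ℂ)).submatrix finProdFinEquiv.symm
      finProdFinEquiv.symm := by
  ext r c
  simp only [kronI4, of_apply, submatrix_apply, kroneckerMap_apply, one_apply, Fin.ext_iff]
  rfl

theorem conjTranspose_kronI4 (E : Matrix (Fin 2) (Fin 2) ℂ) : (kronI4 E)ᴴ = kronI4 Eᴴ := by
  rw [kronI4_eq, kronI4_eq, conjTranspose_submatrix, conjTranspose_kronecker, conjTranspose_one]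

theorem kronI4_mul (E F : Matrix (Fin 2) (Fin 2) ℂ) : kronI4 (E * F) = kronI4 E * kronI4 F := by
  rw [kronI4_eq, kronI4_eq, kronI4_eq, submatrix_mul_equiv, ← mul_kronecker_mul, one_mul]

theorem trace_kronI4 (E : Matrix (Fin 2) (Fin 2) ℂ) : (kronI4 E).trace = 4 * E.trace := by
  have hsum := finProdFinEquiv.symm.sum_comp fun p => (E ⊗ₖ (1 : Matrix (Fin 4) (Fin 4) ℂ)) p p
  rw [kronI4_eq, trace]
  simp only [diag_apply, submatrix_apply]
  rw [hsum]
  change (E ⊗ₖ (1 : Matrix (Fin 4) (Fin 4) ℂ)).trace = _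
  rw [trace_kronecker, trace_one, Fintype.card_fin, mul_comm]
  norm_num

theorem trace_Hqs_mul_kronI4 (W : Matrix (Fin 2) (Fin 2) ℂ) : (Hqs * kronI4 W).trace = 0 := by
  simp [Hqs_eq, add_mul, trace_single_mul, kronI4]

theorem trace_Hqs_mul_Hqs_mul_kronI4 (W : Matrix (Fin 2) (Fin 2) ℂ) :
    (Hqs * Hqs * kronI4 W).trace = W.trace := by
  simp [Hqs_mul_Hqs, add_mul, trace_single_mul, kronI4, trace_fin_two]

theorem Uqs_add (s t : ℝ) : Uqs (s + t) = Uqs s * Uqs t := by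
  rw [Uqs, Uqs, Uqs, ← Matrix.exp_add_of_commute _ _
    ((Commute.refl Hqs).smul_left _ |>.smul_right _), ← add_smul]
  push_cast
  ring_nf

theorem conjTranspose_Uqs (t : ℝ) : (Uqs t)ᴴ = Uqs (-t) := by
  rw [Uqs, Uqs, ← Matrix.exp_conjTranspose, conjTranspose_smul, isHermitian_Hqs.eq]
  congr 2
  simp

theorem Uqs_mul_conjTranspose (t : ℝ) : Uqs t * (Uqs t)ᴴ = 1 := by
  rw [conjTranspose_Uqs, ← Uqs_add, add_neg_cancel, Uqs, Complex.ofReal_zero, mul_zero, neg_zero,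
    zero_smul, NormedSpace.exp_zero]

theorem Uqs_eq (t : ℝ) :
    Uqs t = 1 + ((Real.cos t : ℂ) - 1) • (Hqs * Hqs) - (Complex.I * Real.sin t) • Hqs := by
  rw [Uqs, Matrix.exp_smul_of_mul_mul_self_eq_self Hqs_mul_Hqs_mul_Hqs, Complex.cosh_neg,
    Complex.sinh_neg, mul_comm, Complex.cosh_mul_I, Complex.sinh_mul_I, neg_smul,
    ← sub_eq_add_neg]
  push_cast
  ring_nf

theorem trace_Uqs_mul_kronI4 (t : ℝ) (W : Matrix (Fin 2) (Fin 2) ℂ) :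
    (Uqs t * kronI4 W).trace = ((3 + Real.cos t : ℝ) : ℂ) * W.trace := by
  rw [Uqs_eq, sub_mul, add_mul, one_mul, smul_mul_assoc, smul_mul_assoc, trace_sub, trace_add,
    trace_smul, trace_smul, trace_kronI4, trace_Hqs_mul_Hqs_mul_kronI4, trace_Hqs_mul_kronI4]
  push_cast
  simp only [smul_eq_mul]
  ring

theorem Favg_eq (t : ℝ) (E₀ E₁ : Matrix (Fin 2) (Fin 2) ℂ) :
    Favg t E₀ E₁ = 1 / 72 * (4 * (E₀ᴴ * E₀ + E₁ᴴ * E₁).trace +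
      (((3 + Real.cos t) ^ 2 * (‖E₀.trace‖ ^ 2 + ‖E₁.trace‖ ^ 2) : ℝ) : ℂ)) := by
  have hgram (E : Matrix (Fin 2) (Fin 2) ℂ) :
      ((Uqs t)ᴴ * kronI4 E)ᴴ * ((Uqs t)ᴴ * kronI4 E) = kronI4 (Eᴴ * E) := by
    rw [conjTranspose_mul, conjTranspose_conjTranspose, mul_assoc, ← mul_assoc (Uqs t),
      Uqs_mul_conjTranspose, one_mul, kronI4_mul, conjTranspose_kronI4]
  have htrace (E : Matrix (Fin 2) (Fin 2) ℂ) :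
      ‖((Uqs t)ᴴ * kronI4 E).trace‖ ^ 2 = (3 + Real.cos t) ^ 2 * ‖E.trace‖ ^ 2 := by
    rw [conjTranspose_Uqs, trace_Uqs_mul_kronI4, Real.cos_neg, norm_mul, Complex.norm_real,
      Real.norm_eq_abs, mul_pow, sq_abs]
  rw [Favg, hgram, hgram, htrace, htrace, trace_add, trace_kronI4, trace_kronI4, trace_add]
  push_cast
  ring

theorem Favg_sqrt_smul_one_sqrt_smul {p : ℝ} (hp₀ : 0 ≤ p) (hp₁ : p ≤ 1) (t : ℝ)
    {W : Matrix (Fin 2) (Fin 2) ℂ} (hW : Wᴴ * W = 1) (htrace : W.trace = 0) :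
    Favg t (((Real.sqrt p : ℝ) : ℂ) • 1) (((Real.sqrt (1 - p) : ℝ) : ℂ) • W) =
      ((1 / 18 * (p * (Real.cos t + 3) ^ 2 + 2) : ℝ) : ℂ) := by
  have hsq₀ : (Real.sqrt p : ℂ) ^ 2 = p := by exact_mod_cast Real.sq_sqrt hp₀
  have hsq₁ : (Real.sqrt (1 - p) : ℂ) ^ 2 = 1 - p := by
    exact_mod_cast Real.sq_sqrt (sub_nonneg.mpr hp₁)
  rw [Favg_eq, conjTranspose_smul, conjTranspose_smul, smul_mul_smul, smul_mul_smul, hW,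
    conjTranspose_one, one_mul, trace_add, trace_smul, trace_smul, trace_smul, trace_smul,
    htrace, trace_one]
  simp only [Fintype.card_fin, Nat.cast_ofNat, smul_eq_mul, mul_zero, norm_zero, Complex.star_def,
    Complex.conj_ofReal, norm_mul, Complex.norm_real, Complex.norm_ofNat, Real.norm_eq_abs,
    mul_pow, sq_abs]
  push_cast
  linear_combination (1 / 9 + (3 + Complex.cos t) ^ 2 / 18) * hsq₀ + 1 / 9 * hsq₁

theorem conjTranspose_σx_mul_σx : σxᴴ * σx = 1 := by
  ext i j
  fin_cases i <;> fin_cases j <;> simp [σx, mul_apply, Fin.sum_univ_two]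

theorem conjTranspose_σz_mul_σz : σzᴴ * σz = 1 := by
  ext i j
  fin_cases i <;> fin_cases j <;> simp [σz, mul_apply, Fin.sum_univ_two]

theorem trace_σx : σx.trace = 0 := by simp [σx, trace_fin_two]

theorem trace_σz : σz.trace = 0 := by simp [σz, trace_fin_two]

/-- Average fidelity of the quantum switch under Bit Flip noise on the first qubit:
F_avg = (1/18)·(p·(cos t + 3)² + 2); in particular it coincides with the average
fidelity for the Phase Flip channel. -/
theorem average_fidelity_bit_flip (t : ℝ) (p : ℝ) (hp₀ : 0 ≤ p) (hp₁ : p ≤ 1) :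
    Favg t (((Real.sqrt p : ℝ) : ℂ) • (1 : Matrix (Fin 2) (Fin 2) ℂ))
        (((Real.sqrt (1 - p) : ℝ) : ℂ) • σx) =
      ((1 / 18 * (p * (Real.cos t + 3) ^ 2 + 2) : ℝ) : ℂ) ∧
    Favg t (((Real.sqrt p : ℝ) : ℂ) • (1 : Matrix (Fin 2) (Fin 2) ℂ))
        (((Real.sqrt (1 - p) : ℝ) : ℂ) • σx) =
      Favg t (((Real.sqrt p : ℝ) : ℂ) • (1 : Matrix (Fin 2) (Fin 2) ℂ))
        (((Real.sqrt (1 - p) : ℝ) : ℂ) • σz) := by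
  have hx := Favg_sqrt_smul_one_sqrt_smul hp₀ hp₁ t conjTranspose_σx_mul_σx trace_σx
  have hz := Favg_sqrt_smul_one_sqrt_smul hp₀ hp₁ t conjTranspose_σz_mul_σz trace_σz
  exact ⟨hx, hx.trans hz.symm⟩
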